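/- arXiv:1910.14610 — 2 statements merged into one kernel-verified Lean document; each statement's English description precedes it below -/
import Mathlib

section
/- Let U and V be finite sets, w : U × V → ℝ with w(u,v) ≥ 0, B : U → ℝ, and let σ : V → Option U be an allocation of queries to bidders. Define the earned amount e(v) = w(σ(v), v) when σ(v) = some u and e(v) = 0 when σ(v) = none, and set β(v) = e(v). Let S ⊆ U be a set of 'exhausted' bidders such that for every u ∈ S, B(u) = Σ_{v : σ(v) = some u} w(u,v). Then Σ_{u ∈ S} B(u) + Σ_{v ∈ V} β(v) ≤ 2 · Σ_{v ∈ V} e(v); that is, the dual objective value constructed by the greedy algorithm is at most twice the primal revenue. -/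
open Finset

/-- Accounting step for the greedy algorithm: the dual objective
`Σ_{u ∈ S} B u + Σ_v β v` built by greedy dual fitting is at most twice
the primal revenue `Σ_v e v`. -/
theorem greedy_dual_le_two_primal {U V : Type*} [Fintype U] [Fintype V] [DecidableEq U]
    (w : U × V → ℝ) (hw : ∀ u v, 0 ≤ w (u, v)) (B : U → ℝ)
    (σ : V → Option U) (e : V → ℝ)
    (he : ∀ v, e v = match σ v with | some u => w (u, v) | none => 0)
    (β : V → ℝ) (hβ : ∀ v, β v = e v)
    (S : Finset U)
    (hS : ∀ u ∈ S, B u = ∑ v ∈ Finset.univ.filter (fun v => σ v = some u), w (u, v)) :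
    ∑ u ∈ S, B u + ∑ v, β v ≤ 2 * ∑ v, e v := by
  classical
  have hen : ∀ v, 0 ≤ e v := by
    intro v; rw [he v]; cases σ v with
    | none => simp
    | some u => exact hw u v
  have hβe : ∑ v, β v = ∑ v, e v := Finset.sum_congr rfl fun v _ => hβ v
  have key : ∑ u ∈ S, B u ≤ ∑ v, e v := by
    have h1 : ∑ u ∈ S, B u
        = ∑ u ∈ S, ∑ v ∈ Finset.univ.filter (fun v => σ v = some u), e v := by
      refine Finset.sum_congr rfl fun u hu => ?_
      rw [hS u hu]
      refine Finset.sum_congr rfl fun v hv => ?_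
      simp only [Finset.mem_filter] at hv
      rw [he v, hv.2]
    rw [h1]
    have hdisj : (S : Set U).PairwiseDisjoint
        (fun u => Finset.univ.filter (fun v => σ v = some u)) := by
      intro a _ b _ hab
      refine Finset.disjoint_left.2 fun v hv hv' => hab ?_
      simp only [Finset.mem_filter] at hv hv'
      have := hv.2.symm.trans hv'.2
      exact Option.some.inj this
    rw [← Finset.sum_biUnion hdisj]
    exact Finset.sum_le_sum_of_subset_of_nonneg (Finset.subset_univ _)
      (fun v _ _ => hen v)
  linarith
end

section
/- Let ε, C, L, a be real numbers with 0 < ε ≤ 1/2, C ≥ 0, L > 0, 0 ≤ a ≤ ε³/L. If |ε − ε·C| ≤ L·a + 2·√C·√(ε·L·a), then 1 − 2ε ≤ C ≤ 1 + 3·(ε + ε²). -/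
/-- Lemma of Section 3.3: if the sample is not `r_j`-bad (encoded by the
hypothesis `|ε - ε·C| ≤ L·a + 2·√C·√(ε·L·a)` with `C(j,S) = ε`), and
`a ≤ ε³/L`, then `1 - 2ε ≤ C ≤ 1 + 3(ε + ε²)`. -/
theorem consumption_bounds (ε C L a : ℝ) (hε : 0 < ε) (hε2 : ε ≤ 1 / 2)
    (hC : 0 ≤ C) (hL : 0 < L) (ha0 : 0 ≤ a) (ha : a ≤ ε ^ 3 / L)
    (h : |ε - ε * C| ≤ L * a + 2 * Real.sqrt C * Real.sqrt (ε * L * a)) :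
    1 - 2 * ε ≤ C ∧ C ≤ 1 + 3 * (ε + ε ^ 2) := by
  set s := Real.sqrt C with hs
  have hs0 : 0 ≤ s := Real.sqrt_nonneg C
  have hs2 : s ^ 2 = C := Real.sq_sqrt hC
  have hLa : L * a ≤ ε ^ 3 := by
    rw [le_div_iff₀ hL] at ha; linarith
  have hr : Real.sqrt (ε * L * a) ≤ ε ^ 2 := by
    rw [show ε ^ 2 = Real.sqrt ((ε ^ 2) ^ 2) from (Real.sqrt_sq (by positivity)).symm]
    apply Real.sqrt_le_sqrt
    nlinarith
  have key : ε * |1 - C| ≤ ε ^ 3 + 2 * s * ε ^ 2 := by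
    calc ε * |1 - C| = |ε * (1 - C)| := by rw [abs_mul, abs_of_pos hε]
      _ = |ε - ε * C| := by ring_nf
      _ ≤ L * a + 2 * s * Real.sqrt (ε * L * a) := h
      _ ≤ ε ^ 3 + 2 * s * ε ^ 2 := by nlinarith [Real.sqrt_nonneg (ε * L * a)]
  have key2 : |1 - C| ≤ ε ^ 2 + 2 * s * ε := by
    have := abs_nonneg (1 - C)
    nlinarith
  obtain ⟨h1, h2⟩ := abs_le.mp key2
  constructor
  · -- lower bound
    have hse : 1 ≤ s + ε := by nlinarith [sq_nonneg (s + ε)]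
    nlinarith [mul_nonneg (by linarith : (0:ℝ) ≤ s + ε - 1) (by linarith : (0:ℝ) ≤ s + 1 - ε)]
  · -- upper bound
    have hub : s ≤ 1 + ε + ε ^ 2 := by
      nlinarith [sq_nonneg (s - ε), sq_nonneg ε, sq_nonneg (ε^2)]
    nlinarith [mul_le_mul hub hub hs0 (by positivity : (0:ℝ) ≤ 1 + ε + ε ^ 2),
      mul_pos hε hε, sq_nonneg ε]
end
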